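/- arXiv:1706.08382 — 5 statements merged into one kernel-verified Lean document; each statement's English description precedes it below -/
import Mathlib

section
/- In a simple majority voting system with an odd number N = 2n+1 of voters, the Shapley-Shubik probability that voter 1 votes no and the coalition of yes-voters is losing (i.e., has at most n yes-votes among voters 2..N) equals 3/8 + 1/(8N). -/
open scoped Classical

/-!
Grouping the losing coalitions not containing voter 1 by their size `k ≤ n`, there are
`C(2n, k)` of them, each of weight `1 / ((N + 1) C(N, k))`, and `C(2n, k) / C(2n + 1, k) =
(N - k) / N`. Hence the probability is `∑_{k ≤ n} (N - k) / (N (N + 1))`, an arithmetic sum.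
-/

open Finset

theorem filter_notMem_and_eq_filter_powerset_erase {α : Type*} [Fintype α] [DecidableEq α]
    (a : α) (p : Finset α → Prop) [DecidablePred p] :
    univ.filter (fun A => a ∉ A ∧ p A) = (univ.erase a).powerset.filter p := by
  ext A
  simp [subset_erase]

theorem sum_powerset_filter_card_le_apply_card {α β : Type*} [AddCommMonoid β]
    (s : Finset α) (f : ℕ → β) {n : ℕ} (hn : n ≤ #s) :
    ∑ A ∈ s.powerset with #A ≤ n, f #A = ∑ k ∈ range (n + 1), (#s).choose k • f k := by
  rw [sum_filter, sum_powerset_apply_card (fun k => if k ≤ n then f k else 0),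
    ← sum_range_add_sum_Ico _ (by omega : n + 1 ≤ #s + 1),
    sum_eq_zero (s := Ico (n + 1) (#s + 1)) fun k hk => by
      simp [Nat.lt_iff_add_one_le.mpr (mem_Ico.mp hk).1], add_zero]
  exact sum_congr rfl fun k hk => by simp [Nat.lt_succ_iff.mp (mem_range.mp hk)]

theorem Nat.cast_choose_div_cast_choose_succ {m k : ℕ} (hk : k ≤ m + 1) :
    (m.choose k : ℝ) / (m + 1).choose k = (m + 1 - k) / (m + 1) := by
  have hpos : ((m + 1).choose k : ℝ) ≠ 0 := by exact_mod_cast (Nat.choose_pos hk).ne'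
  rw [div_eq_div_iff hpos (by positivity)]
  have h := congrArg (Nat.cast (R := ℝ)) (Nat.choose_mul_succ_eq m k)
  push_cast [Nat.cast_sub hk] at h
  linarith

theorem sum_range_succ_sub_cast (c : ℝ) (n : ℕ) :
    ∑ k ∈ range (n + 1), (c - k) = (n + 1) * c - n * (n + 1) / 2 := by
  induction n with
  | zero => simp
  | succ n ih => rw [sum_range_succ, ih]; push_cast; ring

/-- In a simple majority voting system with an odd number `N = 2n+1` of voters,
the Shapley-Shubik probability that voter 1 votes no and the coalition of
yes-voters is losing (at most `n` yes-votes among the other voters) equals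
`3/8 + 1/(8N)`. -/
theorem shapley_shubik_blocking_success_odd (n : ℕ) :
    (∑ A ∈ Finset.univ.filter
        (fun A : Finset (Fin (2 * n + 1)) =>
          (⟨0, by omega⟩ : Fin (2 * n + 1)) ∉ A ∧ A.card ≤ n),
      1 / ((((2 * n + 1 : ℕ) : ℝ) + 1) * ((2 * n + 1).choose A.card : ℝ)))
      = 3 / 8 + 1 / (8 * ((2 * n + 1 : ℕ) : ℝ)) := by
  have hcard : #(univ.erase (⟨0, by omega⟩ : Fin (2 * n + 1))) = 2 * n := by simp
  rw [filter_notMem_and_eq_filter_powerset_erase,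
    sum_powerset_filter_card_le_apply_card _ (fun k => 1 / ((((2 * n + 1 : ℕ) : ℝ) + 1) *
      ((2 * n + 1).choose k : ℝ))) (by omega), hcard]
  have hterm : ∀ k ∈ range (n + 1), (2 * n).choose k •
      (1 / ((((2 * n + 1 : ℕ) : ℝ) + 1) * ((2 * n + 1).choose k : ℝ)))
      = ((2 * n + 1 : ℝ) - k) / ((2 * n + 1) * (2 * n + 2)) := by
    intro k hk
    have := Nat.cast_choose_div_cast_choose_succ (m := 2 * n) (k := k) (by linarith [mem_range.mp hk])
    push_cast at this ⊢
    rw [nsmul_eq_mul, mul_one_div, mul_comm ((2 * n + 1 : ℝ) + 1), ← div_div, this]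
    field_simp
    ring
  rw [sum_congr rfl hterm, ← sum_div, sum_range_succ_sub_cast]
  push_cast
  field_simp
  ring
end

section
/- In a simple majority voting system with an even number N of voters (winning = strictly more than N/2 yes-votes), the Shapley-Shubik affirmative success of a voter equals 3/8 - 1/(8(N+1)) and the blocking success equals 3/8 + 3/(8(N+1)); hence the total rate of success equals 3/4 + 1/(4(N+1)). -/
/-!
Among the `C(N, k)` coalitions of size `k`, voter `a` belongs to exactly `k C(N, k) / N`, so the
Shapley-Shubik weights `1 / ((N + 1) C(N, k))` of the size-`k` coalitions containing `a` add up to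
`k / (N (N + 1))`, and those of the ones avoiding `a` to `(N - k) / (N (N + 1))`. Both successes
are then arithmetic sums over `k > N / 2`, resp. `k ≤ N / 2`.
-/

open Finset

section Coalitions

variable {α : Type*} [Fintype α]

theorem sum_filter_and_card_eq_sum_fiberwise (Q : Finset α → Prop) [DecidablePred Q]
    (p : ℕ → Prop) [DecidablePred p] {M : Type*} [AddCommMonoid M] (f : Finset α → M) :
    ∑ A with Q A ∧ p #A, f A
      = ∑ k ∈ range (Fintype.card α + 1) with p k, ∑ A with Q A ∧ #A = k, f A := by
  rw [← sum_fiberwise_of_maps_to (g := card) (t := {k ∈ range (Fintype.card α + 1) | p k})]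
  · refine sum_congr rfl fun k hk => ?_
    rw [filter_filter]
    refine sum_congr (filter_congr fun A _ => ?_) fun _ _ => rfl
    constructor
    · rintro ⟨⟨hQ, -⟩, hA⟩
      exact ⟨hQ, hA⟩
    · rintro ⟨hQ, rfl⟩
      exact ⟨⟨hQ, (mem_filter.1 hk).2⟩, rfl⟩
  · intro A hA
    exact mem_filter.2 ⟨mem_range.2 (Nat.lt_succ_of_le (card_le_univ A)), (mem_filter.1 hA).2.2⟩

theorem sum_filter_and_card_eq_mul {Q : Finset α → Prop} [DecidablePred Q] {k : ℕ}
    {R : Type*} [NonAssocSemiring R] (f : ℕ → R) :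
    ∑ A with Q A ∧ #A = k, f #A = #{A | Q A ∧ #A = k} * f k := by
  rw [sum_congr rfl fun A hA => by rw [(mem_filter.1 hA).2.2], sum_const, nsmul_eq_mul]

variable [DecidableEq α]

theorem card_filter_notMem_card_eq (a : α) (k : ℕ) :
    #{A : Finset α | a ∉ A ∧ #A = k} = (Fintype.card α - 1).choose k := by
  have hpowerset : ({A : Finset α | a ∉ A ∧ #A = k} : Finset (Finset α))
      = powersetCard k (univ.erase a) := by
    ext A
    simp [mem_powersetCard, subset_erase, and_comm]
  rw [hpowerset, card_powersetCard, card_erase_of_mem (mem_univ a), card_univ]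

theorem card_filter_notMem_card_mul (a : α) (k : ℕ) :
    #{A : Finset α | a ∉ A ∧ #A = k} * Fintype.card α
      = (Fintype.card α - k) * (Fintype.card α).choose k := by
  obtain ⟨n, hn⟩ := Nat.exists_eq_succ_of_ne_zero (Fintype.card_pos_iff.2 ⟨a⟩).ne'
  rw [card_filter_notMem_card_eq, hn, Nat.succ_sub_one, Nat.choose_mul_succ_eq, mul_comm]

theorem card_filter_mem_card_mul (a : α) (k : ℕ) :
    #{A : Finset α | a ∈ A ∧ #A = k} * Fintype.card α = k * (Fintype.card α).choose k := by
  have hsplit : #{A : Finset α | a ∈ A ∧ #A = k} + #{A : Finset α | a ∉ A ∧ #A = k}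
      = (Fintype.card α).choose k := by
    rw [← card_univ, ← card_powersetCard,
      ← card_filter_add_card_filter_not (s := powersetCard k univ) (a ∈ ·)]
    congr 2 <;> ext A <;> simp [and_comm]
  have hchoose : k * (Fintype.card α).choose k + (Fintype.card α - k) * (Fintype.card α).choose k
      = Fintype.card α * (Fintype.card α).choose k := by
    rcases le_or_gt k (Fintype.card α) with hk | hk
    · rw [← add_mul, Nat.add_sub_cancel' hk]
    · simp [Nat.choose_eq_zero_of_lt hk]
  have hmul := congrArg (· * Fintype.card α) hsplit
  simp only [add_mul, card_filter_notMem_card_mul] at hmul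
  linarith [mul_comm ((Fintype.card α).choose k) (Fintype.card α)]

theorem sum_filter_mem_card_eq_one_div_choose (a : α) {k : ℕ} (hk : k ≤ Fintype.card α) :
    ∑ A with a ∈ A ∧ #A = k, 1 / (((Fintype.card α : ℝ) + 1) * (Fintype.card α).choose #A)
      = k / (Fintype.card α * (Fintype.card α + 1)) := by
  have hcount :
      (#{A | a ∈ A ∧ #A = k} : ℝ) * Fintype.card α = k * (Fintype.card α).choose k := by
    exact_mod_cast card_filter_mem_card_mul a k
  have hchoose : ((Fintype.card α).choose k : ℝ) ≠ 0 := by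
    exact_mod_cast (Nat.choose_pos hk).ne'
  have hcard : (Fintype.card α : ℝ) ≠ 0 := mod_cast (Fintype.card_pos_iff.2 ⟨a⟩).ne'
  rw [sum_filter_and_card_eq_mul fun j =>
    1 / (((Fintype.card α : ℝ) + 1) * (Fintype.card α).choose j)]
  field_simp
  linear_combination hcount

theorem sum_filter_notMem_card_eq_one_div_choose (a : α) {k : ℕ} (hk : k ≤ Fintype.card α) :
    ∑ A with a ∉ A ∧ #A = k, 1 / (((Fintype.card α : ℝ) + 1) * (Fintype.card α).choose #A)
      = ((Fintype.card α : ℝ) - k) / (Fintype.card α * (Fintype.card α + 1)) := by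
  have hcount : (#{A | a ∉ A ∧ #A = k} : ℝ) * Fintype.card α
      = ((Fintype.card α : ℝ) - k) * (Fintype.card α).choose k := by
    rw [← Nat.cast_sub hk]
    exact_mod_cast card_filter_notMem_card_mul a k
  have hchoose : ((Fintype.card α).choose k : ℝ) ≠ 0 := by
    exact_mod_cast (Nat.choose_pos hk).ne'
  have hcard : (Fintype.card α : ℝ) ≠ 0 := mod_cast (Fintype.card_pos_iff.2 ⟨a⟩).ne'
  rw [sum_filter_and_card_eq_mul fun j =>
    1 / (((Fintype.card α : ℝ) + 1) * (Fintype.card α).choose j)]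
  field_simp
  linear_combination hcount

theorem sum_filter_mem_one_div_choose (a : α) (p : ℕ → Prop) [DecidablePred p] :
    ∑ A with a ∈ A ∧ p #A, 1 / (((Fintype.card α : ℝ) + 1) * (Fintype.card α).choose #A)
      = ∑ k ∈ range (Fintype.card α + 1) with p k,
          (k : ℝ) / (Fintype.card α * (Fintype.card α + 1)) := by
  rw [sum_filter_and_card_eq_sum_fiberwise]
  exact sum_congr rfl fun k hk => sum_filter_mem_card_eq_one_div_choose a
    (Nat.lt_succ_iff.1 (mem_range.1 (mem_filter.1 hk).1))

theorem sum_filter_notMem_one_div_choose (a : α) (p : ℕ → Prop) [DecidablePred p] :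
    ∑ A with a ∉ A ∧ p #A, 1 / (((Fintype.card α : ℝ) + 1) * (Fintype.card α).choose #A)
      = ∑ k ∈ range (Fintype.card α + 1) with p k,
          ((Fintype.card α : ℝ) - k) / (Fintype.card α * (Fintype.card α + 1)) := by
  rw [sum_filter_and_card_eq_sum_fiberwise]
  exact sum_congr rfl fun k hk => sum_filter_notMem_card_eq_one_div_choose a
    (Nat.lt_succ_iff.1 (mem_range.1 (mem_filter.1 hk).1))

end Coalitions

theorem sum_range_succ_natCast_id (n : ℕ) :
    ∑ k ∈ range (n + 1), (k : ℝ) = n * (n + 1) / 2 := by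
  induction n with
  | zero => simp
  | succ n ih =>
    rw [sum_range_succ, ih]
    push_cast
    ring

theorem shapley_shubik_success_even_general (m : ℕ) (v : Fin (2 * m)) :
    (∑ A ∈ Finset.univ.filter
        (fun A : Finset (Fin (2 * m)) => v ∈ A ∧ m < A.card),
      1 / ((((2 * m : ℕ) : ℝ) + 1) * ((2 * m).choose A.card : ℝ)))
      = 3 / 8 - 1 / (8 * (((2 * m : ℕ) : ℝ) + 1)) ∧
    (∑ A ∈ Finset.univ.filter
        (fun A : Finset (Fin (2 * m)) => v ∉ A ∧ A.card ≤ m),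
      1 / ((((2 * m : ℕ) : ℝ) + 1) * ((2 * m).choose A.card : ℝ)))
      = 3 / 8 + 3 / (8 * (((2 * m : ℕ) : ℝ) + 1)) ∧
    (∑ A ∈ Finset.univ.filter
        (fun A : Finset (Fin (2 * m)) => v ∈ A ∧ m < A.card),
      1 / ((((2 * m : ℕ) : ℝ) + 1) * ((2 * m).choose A.card : ℝ))) +
    (∑ A ∈ Finset.univ.filter
        (fun A : Finset (Fin (2 * m)) => v ∉ A ∧ A.card ≤ m),
      1 / ((((2 * m : ℕ) : ℝ) + 1) * ((2 * m).choose A.card : ℝ)))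
      = 3 / 4 + 1 / (4 * (((2 * m : ℕ) : ℝ) + 1)) := by
  have hm : (0 : ℝ) < m := by exact_mod_cast Nat.pos_of_mul_pos_left v.pos
  have affirmative := sum_filter_mem_one_div_choose v (m < ·)
  have blocking := sum_filter_notMem_one_div_choose v (· ≤ m)
  simp only [Fintype.card_fin] at affirmative blocking
  have winning : {k ∈ range (2 * m + 1) | m < k} = Ico (m + 1) (2 * m + 1) := by
    ext k; simp only [mem_filter, mem_range, mem_Ico]; omega
  have losing : {k ∈ range (2 * m + 1) | k ≤ m} = range (m + 1) := by
    ext k; simp only [mem_filter, mem_range]; omega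
  rw [winning, ← sum_div, sum_Ico_eq_sub _ (by omega), sum_range_succ_natCast_id,
    sum_range_succ_natCast_id] at affirmative
  rw [losing, ← sum_div, sum_sub_distrib, sum_const, card_range, nsmul_eq_mul,
    sum_range_succ_natCast_id] at blocking
  rw [affirmative, blocking]
  push_cast
  refine ⟨?_, ?_, ?_⟩ <;> field_simp <;> ring

/-- In a simple majority voting system with an even number `N = 2m` of voters
(winning = strictly more than `N/2` yes-votes), the Shapley-Shubik affirmative
success of a voter equals `3/8 - 1/(8(N+1))`, the blocking success equals
`3/8 + 3/(8(N+1))`, and hence the total rate of success equals `3/4 + 1/(4(N+1))`. -/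
theorem shapley_shubik_success_even (m : ℕ) (hm : 1 ≤ m) (v : Fin (2 * m)) :
    (∑ A ∈ Finset.univ.filter
        (fun A : Finset (Fin (2 * m)) => v ∈ A ∧ m < A.card),
      1 / ((((2 * m : ℕ) : ℝ) + 1) * ((2 * m).choose A.card : ℝ)))
      = 3 / 8 - 1 / (8 * (((2 * m : ℕ) : ℝ) + 1)) ∧
    (∑ A ∈ Finset.univ.filter
        (fun A : Finset (Fin (2 * m)) => v ∉ A ∧ A.card ≤ m),
      1 / ((((2 * m : ℕ) : ℝ) + 1) * ((2 * m).choose A.card : ℝ)))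
      = 3 / 8 + 3 / (8 * (((2 * m : ℕ) : ℝ) + 1)) ∧
    (∑ A ∈ Finset.univ.filter
        (fun A : Finset (Fin (2 * m)) => v ∈ A ∧ m < A.card),
      1 / ((((2 * m : ℕ) : ℝ) + 1) * ((2 * m).choose A.card : ℝ))) +
    (∑ A ∈ Finset.univ.filter
        (fun A : Finset (Fin (2 * m)) => v ∉ A ∧ A.card ≤ m),
      1 / ((((2 * m : ℕ) : ℝ) + 1) * ((2 * m).choose A.card : ℝ)))
      = 3 / 4 + 1 / (4 * (((2 * m : ℕ) : ℝ) + 1)) :=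
  shapley_shubik_success_even_general m v
end

section
/- For the Shapley-Shubik measure on N voters with threshold M (1 ≤ M ≤ N-1), the probability that voter 1 votes yes and at least M of the other N-1 voters vote yes equals 1/2 - M(M+1)/(2N(N+1)). -/
/-!
A coalition of size `k` has Shapley–Shubik probability `1 / ((N + 1) * C(N, k))`. Removing voter 1
from the coalitions containing it identifies them with the subsets of the other `N - 1` voters,
and by `N * C(N - 1, j) = (j + 1) * C(N, j + 1)` all coalitions with `j` other members together
weigh `(j + 1) / (N * (N + 1))`. Summing over `M ≤ j < N` is an arithmetic series.
-/

open Finset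

theorem Finset.sum_filter_mem_eq_sum_powerset_erase {α β : Type*} [Fintype α] [DecidableEq α]
    [AddCommMonoid β] (a : α) (p : Finset α → Prop) [DecidablePred p] (f : Finset α → β) :
    ∑ A ∈ univ.filter (fun A => a ∈ A ∧ p (A.erase a)), f A
      = ∑ B ∈ (univ.erase a).powerset.filter p, f (insert a B) := by
  have notMem {B : Finset α} (hB : B ⊆ univ.erase a) : a ∉ B := fun h => by simpa using hB h
  refine sum_nbij' (fun A => A.erase a) (fun B => insert a B) ?_ ?_ ?_ ?_ ?_
  · intro A hA
    simp only [mem_filter, mem_univ, true_and] at hA ⊢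
    exact ⟨mem_powerset.mpr (erase_subset_erase a (subset_univ A)), hA.2⟩
  · intro B hB
    simp only [mem_filter, mem_powerset, mem_univ, true_and] at hB ⊢
    rw [erase_insert (notMem hB.1)]
    exact ⟨mem_insert_self a B, hB.2⟩
  · intro A hA
    simp only [mem_filter, mem_univ, true_and] at hA
    exact insert_erase hA.1
  · intro B hB
    simp only [mem_filter, mem_powerset] at hB
    exact erase_insert (notMem hB.1)
  · intro A hA
    simp only [mem_filter, mem_univ, true_and] at hA
    rw [insert_erase hA.1]

theorem choose_div_mul_choose_succ {n k : ℕ} (hkn : k ≤ n) :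
    (n.choose k : ℝ) / (((n : ℝ) + 2) * ((n + 1).choose (k + 1) : ℝ))
      = ((k : ℝ) + 1) / (((n : ℝ) + 1) * ((n : ℝ) + 2)) := by
  have hpos : (0 : ℝ) < ((n + 1).choose (k + 1) : ℝ) := by
    exact_mod_cast Nat.choose_pos (Nat.succ_le_succ hkn)
  have absorb : ((n : ℝ) + 1) * n.choose k = (n + 1).choose (k + 1) * ((k : ℝ) + 1) := by
    exact_mod_cast Nat.add_one_mul_choose_eq n k
  rw [div_eq_div_iff (by positivity) (by positivity)]
  linear_combination ((n : ℝ) + 2) * absorb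

theorem sum_Ico_cast_add_one {m n : ℕ} (hmn : m ≤ n) :
    ∑ k ∈ Ico m n, ((k : ℝ) + 1) = ((n : ℝ) * (n + 1) - m * (m + 1)) / 2 := by
  induction n, hmn using Nat.le_induction with
  | base => simp
  | succ n hmn ih =>
    rw [sum_Ico_succ_top hmn, ih]
    push_cast
    ring

/-- For the Shapley-Shubik measure on `N` voters with threshold `M`
(`1 ≤ M ≤ N-1`), the probability that voter 1 votes yes and at least `M` of the
other `N-1` voters vote yes equals `1/2 - M(M+1)/(2N(N+1))`. -/
theorem shapley_shubik_threshold_success (N M : ℕ) (hMN : M + 1 ≤ N) :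
    (∑ A ∈ Finset.univ.filter
        (fun A : Finset (Fin N) =>
          (⟨0, by omega⟩ : Fin N) ∈ A ∧ M ≤ (A.erase (⟨0, by omega⟩ : Fin N)).card),
      1 / (((N : ℝ) + 1) * (N.choose A.card : ℝ)))
      = 1 / 2 - (M : ℝ) * ((M : ℝ) + 1) / (2 * (N : ℝ) * ((N : ℝ) + 1)) := by
  obtain ⟨n, rfl⟩ : ∃ n, N = n + 1 := ⟨N - 1, by omega⟩
  set e : Fin (n + 1) := ⟨0, by omega⟩
  have hcard : #(univ.erase e) = n := by simp
  rw [sum_filter_mem_eq_sum_powerset_erase e (fun B => M ≤ #B) (fun A => 1 / _), sum_filter]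
  have e_notMem {B : Finset (Fin (n + 1))} (hB : B ∈ (univ.erase e).powerset) : e ∉ B :=
    fun h => by simpa using mem_powerset.mp hB h
  have hrange : (range (n + 1)).filter (M ≤ ·) = Ico M (n + 1) := by ext; simp; omega
  let w (k : ℕ) : ℝ := if M ≤ k then 1 / (((n : ℝ) + 2) * ((n + 1).choose (k + 1) : ℝ)) else 0
  calc _ = ∑ B ∈ (univ.erase e).powerset, w #B := by
        refine sum_congr rfl fun B hB => ?_
        rw [card_insert_of_notMem (e_notMem hB)]
        simp only [w]
        push_cast
        ring_nf
    _ = ∑ k ∈ Ico M (n + 1), ((k : ℝ) + 1) / (((n : ℝ) + 1) * ((n : ℝ) + 2)) := by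
        rw [sum_powerset_apply_card w, hcard, ← hrange, sum_filter]
        refine sum_congr rfl fun k hk => ?_
        simp only [w, nsmul_eq_mul]
        split_ifs
        · rw [mul_one_div, choose_div_mul_choose_succ (by simpa [Nat.lt_succ_iff] using hk)]
        · simp
    _ = _ := by
        rw [← sum_div, sum_Ico_cast_add_one (by omega)]
        push_cast
        field_simp
        ring
end

section
/- In a simple voting system with N voters, unit weights, and fixed relative quota r ∈ (0,1), the Shapley-Shubik efficiency E_S = P_S(Σ x_i ≥ rN) converges to 1 - r as N → ∞. -/
/-! Under the Shapley–Shubik measure a profile with `k` yes-voters has weight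
`∫₀¹ pᵏ (1-p)^(N-k) dp = 1 / ((N+1) · C(N,k))`, so the number of yes-voters is uniformly
distributed on `{0, …, N}`. The efficiency is therefore `(N + 1 - ⌈rN⌉) / (N + 1)`,
which tends to `1 - r`. -/

open scoped Classical

open Finset Filter Topology

theorem sum_filter_card_one_div_mul_choose {α : Type*} [Fintype α] (P : ℕ → Prop)
    [DecidablePred P] :
    ∑ A ∈ univ.filter (fun A : Finset α => P #A),
        1 / ((Fintype.card α + 1 : ℝ) * (Fintype.card α).choose #A)
      = #((range (Fintype.card α + 1)).filter P) / (Fintype.card α + 1) := by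
  set n := Fintype.card α
  have hlevel : ∀ m ∈ range (n + 1),
      n.choose m • (if P m then 1 / ((n + 1 : ℝ) * n.choose m) else 0)
        = if P m then 1 / (n + 1 : ℝ) else 0 := by
    intro m hm
    have : (n.choose m : ℝ) ≠ 0 := by
      exact_mod_cast (Nat.choose_pos (Nat.lt_succ_iff.1 (mem_range.1 hm))).ne'
    split_ifs
    · rw [nsmul_eq_mul]
      field_simp
    · rw [smul_zero]
  rw [sum_filter, ← powerset_univ,
    sum_powerset_apply_card (fun m ↦ if P m then 1 / ((n + 1 : ℝ) * n.choose m) else 0),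
    card_univ, sum_congr rfl hlevel, ← sum_filter, sum_const, nsmul_eq_mul, mul_one_div]

theorem card_filter_range_le {R : Type*} [Semiring R] [LinearOrder R] [FloorSemiring R]
    (x : R) (n : ℕ) : #((range n).filter (fun m : ℕ ↦ x ≤ m)) = n - ⌈x⌉₊ := by
  have : (range n).filter (fun m : ℕ ↦ x ≤ m) = Ico ⌈x⌉₊ n := by
    ext m
    simp [Nat.ceil_le, and_comm]
  rw [this, Nat.card_Ico]

theorem tendsto_nat_ceil_mul_div_add_one {r : ℝ} (hr : 0 ≤ r) :
    Tendsto (fun N : ℕ ↦ (⌈r * N⌉₊ : ℝ) / (N + 1)) atTop (𝓝 r) := by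
  have hprod : Tendsto (fun N : ℕ ↦ (⌈r * N⌉₊ : ℝ) / N * (N / (N + 1))) atTop (𝓝 (r * 1)) :=
    ((tendsto_nat_ceil_mul_div_atTop hr).comp tendsto_natCast_atTop_atTop).mul
      (tendsto_natCast_div_add_atTop 1)
  rw [mul_one] at hprod
  refine hprod.congr' ((eventually_ne_atTop 0).mono fun N hN ↦ ?_)
  have : (N : ℝ) ≠ 0 := Nat.cast_ne_zero.2 hN
  field_simp

/-- In a simple voting system with `N` voters, unit weights, and fixed relative
quota `r ∈ (0,1)`, the Shapley-Shubik efficiency `E_S = P_S(Σ x_i ≥ rN)`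
converges to `1 - r` as `N → ∞`. -/
theorem shapley_shubik_efficiency_limit (r : ℝ) (hr0 : 0 < r) (hr1 : r < 1) :
    Filter.Tendsto
      (fun N : ℕ => ∑ A ∈ Finset.univ.filter
          (fun A : Finset (Fin N) => r * (N : ℝ) ≤ (A.card : ℝ)),
        1 / (((N : ℝ) + 1) * (N.choose A.card : ℝ)))
      Filter.atTop (nhds (1 - r)) := by
  have hquota : ∀ N : ℕ, ⌈r * N⌉₊ ≤ N + 1 := fun N ↦
    Nat.ceil_le.2 (by push_cast; nlinarith [(N.cast_nonneg : (0 : ℝ) ≤ N)])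
  have hefficiency : ∀ N : ℕ, ∑ A ∈ univ.filter (fun A : Finset (Fin N) ↦ r * (N : ℝ) ≤ #A),
      1 / ((N + 1 : ℝ) * N.choose #A) = 1 - (⌈r * N⌉₊ : ℝ) / (N + 1) := by
    intro N
    have h := sum_filter_card_one_div_mul_choose (α := Fin N) (fun m ↦ r * (N : ℝ) ≤ m)
    rw [Fintype.card_fin] at h
    rw [h, card_filter_range_le, Nat.cast_sub (hquota N), Nat.cast_add_one]
    field_simp
  simp only [hefficiency]
  exact (tendsto_nat_ceil_mul_div_add_one hr0.le).const_sub 1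
end

section
/- In a simple voting system with N voters, unit weights and relative quota r ∈ (0,1), the Shapley-Shubik affirmative success of a voter converges to 1/2 - r²/2 and the blocking success converges to 1/2 - (1-r)²/2 as N → ∞; hence the total success rate converges to 1 - (r² + (1-r)²)/2. -/
/-!
Sorting coalitions by the number `k` of yes-votes among the other `N` voters, the `C(N, k)`
coalitions of each kind together carry Shapley–Shubik weight `(k + 1) / ((N + 1)(N + 2))` if
voter 1 votes yes and `(N + 1 - k) / ((N + 1)(N + 2))` if he votes no. Both successes are
therefore arithmetic sums, with closed forms `1/2 - q(q - 1) / (2(N + 1)(N + 2))` and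
`q / (N + 2) - q(q - 1) / (2(N + 1)(N + 2))` in the quota `q = ⌈r(N + 1)⌉`, and
`q / (N + 1) → r`.
-/

open scoped Classical

/-- Shapley-Shubik affirmative success of voter 1 in the simple voting system
with `N+1` voters, unit weights and relative quota `r` (winning = at least
`⌈r(N+1)⌉` yes-votes). -/
noncomputable def ssAffSuccess (r : ℝ) (N : ℕ) : ℝ :=
  ∑ A ∈ Finset.univ.filter
      (fun A : Finset (Fin (N + 1)) =>
        (0 : Fin (N + 1)) ∈ A ∧
          ⌈r * ((N : ℝ) + 1)⌉₊ - 1 ≤ (A.erase (0 : Fin (N + 1))).card),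
    1 / (((N : ℝ) + 2) * ((N + 1).choose A.card : ℝ))

/-- Shapley-Shubik blocking success of voter 1 in the same system. -/
noncomputable def ssBlockSuccess (r : ℝ) (N : ℕ) : ℝ :=
  ∑ A ∈ Finset.univ.filter
      (fun A : Finset (Fin (N + 1)) =>
        (0 : Fin (N + 1)) ∉ A ∧ A.card ≤ ⌈r * ((N : ℝ) + 1)⌉₊ - 1),
    1 / (((N : ℝ) + 2) * ((N + 1).choose A.card : ℝ))

open Finset Filter Topology

section SubsetSums

variable {α M : Type*} [DecidableEq α] [AddCommMonoid M] {a : α} {s : Finset α}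
  (P : ℕ → Prop) [DecidablePred P] (g : ℕ → M)

theorem sum_powerset_insert_filter_mem (ha : a ∉ s) :
    ∑ A ∈ (insert a s).powerset with a ∈ A ∧ P #(A.erase a), g #A =
      ∑ k ∈ range (#s + 1) with P k, (#s).choose k • g (k + 1) := by
  have ha' : ∀ t ∈ s.powerset, a ∉ t := fun t ht => notMem_mono (mem_powerset.1 ht) ha
  calc _ = ∑ t ∈ s.powerset, if P #t then g (#t + 1) else 0 := by
        rw [sum_filter, sum_powerset_insert ha,
          sum_eq_zero fun t ht => if_neg fun h => ha' t ht h.1, zero_add]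
        refine sum_congr rfl fun t ht => ?_
        simp only [mem_insert_self, true_and, erase_insert (ha' t ht),
          card_insert_of_notMem (ha' t ht)]
    _ = _ := by
        rw [sum_powerset_apply_card fun k => if P k then g (k + 1) else 0, sum_filter]
        simp_rw [smul_ite, smul_zero]

theorem sum_powerset_insert_filter_notMem (ha : a ∉ s) :
    ∑ A ∈ (insert a s).powerset with a ∉ A ∧ P #A, g #A =
      ∑ k ∈ range (#s + 1) with P k, (#s).choose k • g k := by
  have : ((insert a s).powerset.filter fun A => a ∉ A ∧ P #A) = s.powerset.filter (P #·) := by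
    ext A
    simp only [mem_filter, mem_powerset, ← and_assoc, and_congr_left_iff]
    exact fun _ => ⟨fun h => (subset_insert_iff_of_notMem h.2).1 h.1,
      fun h => ⟨h.trans (subset_insert a s), notMem_mono h ha⟩⟩
  rw [this, sum_filter, sum_powerset_apply_card fun k => if P k then g k else 0, sum_filter]
  simp_rw [smul_ite, smul_zero]

end SubsetSums

section Binomial

variable {K : Type*} [Field K] [CharZero K]

theorem Nat.choose_div_choose_add_one_add_one {n k : ℕ} (hk : k ≤ n) :
    (n.choose k : K) / (n + 1).choose (k + 1) = (k + 1) / (n + 1) := by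
  have hpos : ((n + 1).choose (k + 1) : K) ≠ 0 := by
    exact_mod_cast (Nat.choose_pos (by omega)).ne'
  rw [div_eq_div_iff hpos (Nat.cast_add_one_ne_zero n)]
  have := Nat.add_one_mul_choose_eq n k
  rw [← Nat.cast_inj (R := K)] at this
  push_cast at this
  linear_combination this

theorem Nat.choose_div_choose_add_one {n k : ℕ} (hk : k ≤ n + 1) :
    (n.choose k : K) / (n + 1).choose k = (n + 1 - k) / (n + 1) := by
  have hpos : ((n + 1).choose k : K) ≠ 0 := by
    exact_mod_cast (Nat.choose_pos hk).ne'
  rw [div_eq_div_iff hpos (Nat.cast_add_one_ne_zero n)]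
  have := Nat.choose_mul_succ_eq n k
  rw [← Nat.cast_inj (R := K)] at this
  push_cast [hk] at this
  linear_combination this

end Binomial

theorem sum_range_natCast (n : ℕ) : ∑ i ∈ range n, (i : ℝ) = n * (n - 1) / 2 := by
  induction n with
  | zero => simp
  | succ n ih => rw [sum_range_succ, ih]; push_cast; ring

noncomputable def quota (r : ℝ) (N : ℕ) : ℕ := ⌈r * ((N : ℝ) + 1)⌉₊

theorem one_le_quota {r : ℝ} (hr : 0 < r) (N : ℕ) : 1 ≤ quota r N :=
  Nat.one_le_iff_ne_zero.2 <| by rw [quota, ne_eq, Nat.ceil_eq_zero, not_le]; positivity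

theorem quota_le {r : ℝ} (hr : r ≤ 1) (N : ℕ) : quota r N ≤ N + 1 :=
  Nat.ceil_le.2 <| by push_cast; nlinarith

theorem ssAffSuccess_eq_sum (r : ℝ) (N : ℕ) :
    ssAffSuccess r N =
      ∑ k ∈ range (N + 1) with quota r N - 1 ≤ k,
        ((k : ℝ) + 1) / (((N : ℝ) + 1) * (N + 2)) := by
  rw [ssAffSuccess, ← powerset_univ, ← insert_erase (mem_univ (0 : Fin (N + 1)))]
  refine (sum_powerset_insert_filter_mem (quota r N - 1 ≤ ·)
    (fun k => 1 / (((N : ℝ) + 2) * (N + 1).choose k)) (notMem_erase 0 univ)).trans ?_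
  rw [card_erase_of_mem (mem_univ 0), card_univ, Fintype.card_fin, Nat.add_sub_cancel]
  refine sum_congr rfl fun k hk => ?_
  have hkN : k ≤ N := Nat.lt_succ_iff.1 (mem_range.1 (mem_filter.1 hk).1)
  calc _ = (N.choose k : ℝ) / (N + 1).choose (k + 1) / (N + 2) := by
        rw [nsmul_eq_mul, mul_one_div, mul_comm ((N : ℝ) + 2), ← div_div]
    _ = _ := by rw [Nat.choose_div_choose_add_one_add_one hkN, div_div]

theorem ssBlockSuccess_eq_sum (r : ℝ) (N : ℕ) :
    ssBlockSuccess r N =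
      ∑ k ∈ range (N + 1) with k ≤ quota r N - 1,
        ((N : ℝ) + 1 - k) / (((N : ℝ) + 1) * (N + 2)) := by
  rw [ssBlockSuccess, ← powerset_univ, ← insert_erase (mem_univ (0 : Fin (N + 1)))]
  refine (sum_powerset_insert_filter_notMem (· ≤ quota r N - 1)
    (fun k => 1 / (((N : ℝ) + 2) * (N + 1).choose k)) (notMem_erase 0 univ)).trans ?_
  rw [card_erase_of_mem (mem_univ 0), card_univ, Fintype.card_fin, Nat.add_sub_cancel]
  refine sum_congr rfl fun k hk => ?_
  have hkN : k ≤ N := Nat.lt_succ_iff.1 (mem_range.1 (mem_filter.1 hk).1)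
  calc _ = (N.choose k : ℝ) / (N + 1).choose k / (N + 2) := by
        rw [nsmul_eq_mul, mul_one_div, mul_comm ((N : ℝ) + 2), ← div_div]
    _ = _ := by rw [Nat.choose_div_choose_add_one (by omega), div_div]

theorem ssAffSuccess_eq {r : ℝ} (hr0 : 0 < r) (hr1 : r ≤ 1) (N : ℕ) :
    ssAffSuccess r N =
      1 / 2 - (quota r N : ℝ) * (quota r N - 1) / (((N : ℝ) + 1) * (N + 2)) / 2 := by
  have hq1 := one_le_quota hr0 N
  have hqN := quota_le hr1 N
  have hfilter : (range (N + 1)).filter (quota r N - 1 ≤ ·) = Ico (quota r N - 1) (N + 1) := by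
    ext k; simp only [mem_filter, mem_range, mem_Ico]; omega
  have hshift : ∑ k ∈ Ico (quota r N - 1) (N + 1), ((k : ℝ) + 1) =
      ∑ j ∈ Ico (quota r N) (N + 2), (j : ℝ) := by
    have := sum_Ico_add' (fun j : ℕ => (j : ℝ)) (quota r N - 1) (N + 1) 1
    rw [Nat.sub_add_cancel hq1] at this
    exact_mod_cast this
  rw [ssAffSuccess_eq_sum, hfilter, ← sum_div, hshift, sum_Ico_eq_sub _ (by omega),
    sum_range_natCast, sum_range_natCast]
  field_simp
  push_cast
  ring

theorem ssBlockSuccess_eq {r : ℝ} (hr0 : 0 < r) (hr1 : r ≤ 1) (N : ℕ) :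
    ssBlockSuccess r N =
      (quota r N : ℝ) / (N + 2) -
        (quota r N : ℝ) * (quota r N - 1) / (((N : ℝ) + 1) * (N + 2)) / 2 := by
  have hq1 := one_le_quota hr0 N
  have hqN := quota_le hr1 N
  have hfilter : (range (N + 1)).filter (· ≤ quota r N - 1) = range (quota r N) := by
    ext k; simp only [mem_filter, mem_range]; omega
  rw [ssBlockSuccess_eq_sum, hfilter, ← sum_div, sum_sub_distrib, sum_const, card_range,
    nsmul_eq_mul, sum_range_natCast]
  field_simp

theorem tendsto_quota_div {r : ℝ} (hr : 0 ≤ r) :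
    Tendsto (fun N : ℕ => (quota r N : ℝ) / (N + 1)) atTop (𝓝 r) :=
  (tendsto_nat_ceil_mul_div_atTop hr).comp
    (tendsto_atTop_add_const_right _ 1 tendsto_natCast_atTop_atTop)

theorem tendsto_natCast_add_one_div_add_two :
    Tendsto (fun N : ℕ => ((N : ℝ) + 1) / (N + 2)) atTop (𝓝 1) := by
  refine ((tendsto_natCast_div_add_atTop (1 : ℝ)).comp (tendsto_add_atTop_nat 1)).congr
    fun N => ?_
  simp only [Function.comp_apply, Nat.cast_add_one]
  ring

theorem tendsto_quota_div_add_two {r : ℝ} (hr : 0 ≤ r) :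
    Tendsto (fun N : ℕ => (quota r N : ℝ) / (N + 2)) atTop (𝓝 r) := by
  have h := (tendsto_quota_div hr).mul tendsto_natCast_add_one_div_add_two
  rw [mul_one] at h
  refine h.congr fun N => ?_
  field_simp

theorem tendsto_quota_mul_pred_div {r : ℝ} (hr : 0 ≤ r) :
    Tendsto (fun N : ℕ => (quota r N : ℝ) * (quota r N - 1) / (((N : ℝ) + 1) * (N + 2)))
      atTop (𝓝 (r ^ 2)) := by
  have h := (tendsto_quota_div hr).mul (((tendsto_quota_div hr).sub
    tendsto_one_div_add_atTop_nhds_zero_nat).mul tendsto_natCast_add_one_div_add_two)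
  rw [sub_zero, mul_one, ← sq] at h
  refine h.congr fun N => ?_
  field_simp

/-- In a simple voting system with unit weights and relative quota `r ∈ (0,1)`,
the Shapley-Shubik affirmative success of a voter converges to `1/2 - r²/2`, the
blocking success converges to `1/2 - (1-r)²/2`, and hence the total success rate
converges to `1 - (r² + (1-r)²)/2`, as the number of voters tends to infinity. -/
theorem shapley_shubik_success_limit (r : ℝ) (hr0 : 0 < r) (hr1 : r < 1) :
    Filter.Tendsto (fun N => ssAffSuccess r N) Filter.atTop
      (nhds (1 / 2 - r ^ 2 / 2)) ∧
    Filter.Tendsto (fun N => ssBlockSuccess r N) Filter.atTop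
      (nhds (1 / 2 - (1 - r) ^ 2 / 2)) ∧
    Filter.Tendsto (fun N => ssAffSuccess r N + ssBlockSuccess r N) Filter.atTop
      (nhds (1 - (r ^ 2 + (1 - r) ^ 2) / 2)) := by
  have hsq := (tendsto_quota_mul_pred_div hr0.le).div_const 2
  have haff : Tendsto (fun N => ssAffSuccess r N) atTop (𝓝 (1 / 2 - r ^ 2 / 2)) := by
    simp only [ssAffSuccess_eq hr0 hr1.le]
    exact tendsto_const_nhds.sub hsq
  have hblock : Tendsto (fun N => ssBlockSuccess r N) atTop (𝓝 (1 / 2 - (1 - r) ^ 2 / 2)) := by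
    rw [show (1 : ℝ) / 2 - (1 - r) ^ 2 / 2 = r - r ^ 2 / 2 by ring]
    simp only [ssBlockSuccess_eq hr0 hr1.le]
    exact (tendsto_quota_div_add_two hr0.le).sub hsq
  refine ⟨haff, hblock, ?_⟩
  convert haff.add hblock using 2
  ring
end
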